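/- Let M > 1 and define the diagonal operator Q₀ on ℓ²({1,2,3,4} × ℤ²) by (Q₀)_{c,c;mn,mn} = ∑_{p ∈ ℤ³} 1/((m² + ‖p‖² + 1)(n² + ‖p‖² + 1)). Then Q₀ is a bounded operator, with ‖Q₀‖ ≤ K for an absolute constant K, and Q₀ is not trace class: ∑_{m,n ∈ ℤ} ∑_{p∈ℤ³} 1/((m²+‖p‖²+1)(n²+‖p‖²+1)) = +∞. -/

import Mathlib

open scoped ENNReal

/-- Squared Euclidean norm on `ℤ³`. -/
def normSq3 (p : ℤ × ℤ × ℤ) : ℤ := p.1 ^ 2 + p.2.1 ^ 2 + p.2.2 ^ 2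

/-- The diagonal entry summand `1/((m²+‖p‖²+1)(n²+‖p‖²+1))` of `Q₀`. -/
noncomputable def q0Summand (m n : ℤ) (p : ℤ × ℤ × ℤ) : ℝ :=
  1 / (((m : ℝ) ^ 2 + (normSq3 p : ℝ) + 1) * ((n : ℝ) ^ 2 + (normSq3 p : ℝ) + 1))

noncomputable def uAux (a : ℤ) : ℝ := ((a:ℝ)^2 + 1) ^ (-(2/3) : ℝ)

lemma uAux_nonneg (a : ℤ) : 0 ≤ uAux a := by
  unfold uAux; positivity

lemma uAux_nat_summable : Summable (fun n : ℕ => ((n:ℝ)^2 + 1) ^ (-(2/3) : ℝ)) := by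
  have h1 : Summable (fun n : ℕ => 2 * (1 / |(n:ℝ) + 1| ^ ((4:ℝ)/3))) :=
    ((Real.summable_one_div_nat_add_rpow 1 (4/3)).mpr (by norm_num)).mul_left 2
  apply h1.of_nonneg_of_le (fun n => by positivity)
  intro n
  have hn1 : (0:ℝ) < (n:ℝ) + 1 := by positivity
  have key : ((n:ℝ) + 1) ^ ((4:ℝ)/3) ≤ 2 * ((n:ℝ)^2 + 1) ^ ((2:ℝ)/3) := by
    have e1 : ((n:ℝ) + 1) ^ ((4:ℝ)/3) = (((n:ℝ) + 1) ^ (2:ℕ)) ^ ((2:ℝ)/3) := by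
      rw [← Real.rpow_natCast ((n:ℝ)+1) 2, ← Real.rpow_mul hn1.le]
      norm_num
    rw [e1]
    calc (((n:ℝ) + 1) ^ (2:ℕ)) ^ ((2:ℝ)/3)
        ≤ (2 * ((n:ℝ)^2 + 1)) ^ ((2:ℝ)/3) := by
          apply Real.rpow_le_rpow (by positivity) (by nlinarith [sq_nonneg ((n:ℝ) - 1)]) (by norm_num)
      _ = 2 ^ ((2:ℝ)/3) * ((n:ℝ)^2 + 1) ^ ((2:ℝ)/3) := by
          rw [Real.mul_rpow (by norm_num) (by positivity)]
      _ ≤ 2 * ((n:ℝ)^2 + 1) ^ ((2:ℝ)/3) := by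
          have : (2:ℝ) ^ ((2:ℝ)/3) ≤ 2 ^ (1:ℝ) :=
            Real.rpow_le_rpow_of_exponent_le (by norm_num) (by norm_num)
          rw [Real.rpow_one] at this
          exact mul_le_mul_of_nonneg_right this (by positivity)
  rw [Real.rpow_neg (by positivity), abs_of_pos hn1]
  rw [inv_eq_one_div, mul_one_div, div_le_div_iff₀ (by positivity) (by positivity), one_mul]
  exact key

lemma uAux_summable : Summable uAux := by
  apply Summable.of_nat_of_neg
  · exact uAux_nat_summable.congr (fun n => by unfold uAux; norm_num)
  · exact uAux_nat_summable.congr (fun n => by unfold uAux; push_cast; rw [neg_sq])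

noncomputable def gAux (p : ℤ × ℤ × ℤ) : ℝ := 1 / ((normSq3 p : ℝ) + 1) ^ 2

lemma normSq3_cast (p : ℤ × ℤ × ℤ) :
    (normSq3 p : ℝ) = (p.1:ℝ)^2 + (p.2.1:ℝ)^2 + (p.2.2:ℝ)^2 := by
  unfold normSq3; push_cast; ring

lemma gAux_le (p : ℤ × ℤ × ℤ) : gAux p ≤ uAux p.1 * (uAux p.2.1 * uAux p.2.2) := by
  obtain ⟨a, b, c⟩ := p
  have hA0 : (0:ℝ) < (a:ℝ)^2 + 1 := by positivity
  have hB0 : (0:ℝ) < (b:ℝ)^2 + 1 := by positivity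
  have hC0 : (0:ℝ) < (c:ℝ)^2 + 1 := by positivity
  have hS : (normSq3 (a,b,c) : ℝ) + 1 = (a:ℝ)^2 + (b:ℝ)^2 + (c:ℝ)^2 + 1 := by
    rw [normSq3_cast]
  have hS0 : (0:ℝ) < (normSq3 (a,b,c) : ℝ) + 1 := by rw [hS]; positivity
  have hAS : (a:ℝ)^2 + 1 ≤ (normSq3 (a,b,c) : ℝ) + 1 := by
    rw [hS]; nlinarith [sq_nonneg ((b:ℝ)), sq_nonneg ((c:ℝ))]
  have hBS : (b:ℝ)^2 + 1 ≤ (normSq3 (a,b,c) : ℝ) + 1 := by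
    rw [hS]; nlinarith [sq_nonneg ((a:ℝ)), sq_nonneg ((c:ℝ))]
  have hCS : (c:ℝ)^2 + 1 ≤ (normSq3 (a,b,c) : ℝ) + 1 := by
    rw [hS]; nlinarith [sq_nonneg ((a:ℝ)), sq_nonneg ((b:ℝ))]
  have hprod : ((a:ℝ)^2+1) * ((b:ℝ)^2+1) * ((c:ℝ)^2+1) ≤ ((normSq3 (a,b,c) : ℝ) + 1) ^ 3 := by
    have h1 : ((a:ℝ)^2+1) * ((b:ℝ)^2+1) ≤ ((normSq3 (a,b,c):ℝ)+1) * ((normSq3 (a,b,c):ℝ)+1) :=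
      mul_le_mul hAS hBS hB0.le hS0.le
    have h2 : ((a:ℝ)^2+1) * ((b:ℝ)^2+1) * ((c:ℝ)^2+1)
        ≤ ((normSq3 (a,b,c):ℝ)+1) * ((normSq3 (a,b,c):ℝ)+1) * ((normSq3 (a,b,c):ℝ)+1) :=
      mul_le_mul h1 hCS hC0.le (by positivity)
    nlinarith [h2]
  have hu : uAux a * (uAux b * uAux c)
      = (((a:ℝ)^2+1) * ((b:ℝ)^2+1) * ((c:ℝ)^2+1)) ^ (-(2/3) : ℝ) := by
    unfold uAux
    rw [Real.mul_rpow (by positivity) hC0.le, Real.mul_rpow hA0.le hB0.le]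
    ring
  rw [hu]
  unfold gAux
  rw [Real.rpow_neg (by positivity), one_div, inv_le_inv₀ (by positivity) (by positivity)]
  calc (((a:ℝ)^2+1) * ((b:ℝ)^2+1) * ((c:ℝ)^2+1)) ^ ((2:ℝ)/3)
      ≤ ((((normSq3 (a,b,c) : ℝ) + 1) ^ (3:ℕ)) : ℝ) ^ ((2:ℝ)/3) :=
        Real.rpow_le_rpow (by positivity) hprod (by norm_num)
    _ = ((normSq3 (a,b,c) : ℝ) + 1) ^ (2:ℕ) := by
        rw [← Real.rpow_natCast ((normSq3 (a,b,c) : ℝ) + 1) 3, ← Real.rpow_mul hS0.le,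
          ← Real.rpow_natCast ((normSq3 (a,b,c) : ℝ) + 1) 2]
        norm_num

lemma gAux_summable : Summable gAux := by
  have hu2 : Summable (fun q : ℤ × ℤ => uAux q.1 * uAux q.2) :=
    uAux_summable.mul_of_nonneg uAux_summable uAux_nonneg uAux_nonneg
  have hu3 : Summable (fun p : ℤ × (ℤ × ℤ) => uAux p.1 * (uAux p.2.1 * uAux p.2.2)) :=
    (uAux_summable.mul_of_nonneg hu2 uAux_nonneg
      (fun q => mul_nonneg (uAux_nonneg _) (uAux_nonneg _)))
  apply hu3.of_nonneg_of_le (fun p => by unfold gAux; positivity) gAux_le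

lemma normSq3_nonneg_real (p : ℤ × ℤ × ℤ) : (0:ℝ) ≤ (normSq3 p : ℝ) := by
  rw [normSq3_cast]; positivity

lemma q0_le_gAux (m n : ℤ) (p : ℤ × ℤ × ℤ) : q0Summand m n p ≤ gAux p := by
  unfold q0Summand gAux
  have hs := normSq3_nonneg_real p
  apply one_div_le_one_div_of_le (by positivity)
  nlinarith [sq_nonneg ((m:ℝ)), sq_nonneg ((n:ℝ)), sq_nonneg ((m:ℝ)*(n:ℝ)), sq_nonneg ((normSq3 p:ℝ)+1)]

lemma q0_nonneg (m n : ℤ) (p : ℤ × ℤ × ℤ) : 0 ≤ q0Summand m n p := by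
  unfold q0Summand
  have hs := normSq3_nonneg_real p
  positivity

/-- The diagonal operator `Q₀` is bounded (its diagonal entries are uniformly bounded)
but not trace class (the sum of its diagonal entries diverges). -/
theorem Q0_bounded_not_traceClass :
    (∃ K : ℝ, 0 < K ∧ ∀ m n : ℤ, (∑' p : ℤ × ℤ × ℤ, q0Summand m n p) ≤ K) ∧
    (∑' (mn : ℤ × ℤ) (p : ℤ × ℤ × ℤ), ENNReal.ofReal (q0Summand mn.1 mn.2 p)) = ⊤ := by
  constructor
  · refine ⟨∑' p, gAux p, ?_, ?_⟩
    · have h1 : gAux (0,0,0) ≤ ∑' p, gAux p :=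
        Summable.le_tsum gAux_summable _ (fun _ _ => by unfold gAux; positivity)
      have h2 : gAux (0,0,0) = 1 := by unfold gAux normSq3; norm_num
      linarith
    · intro m n
      exact Summable.tsum_le_tsum (q0_le_gAux m n)
        ((gAux_summable.of_nonneg_of_le (q0_nonneg m n) (q0_le_gAux m n))) gAux_summable
  · rw [← top_le_iff]
    have inj : Function.Injective (fun k : ℕ => (((k:ℤ), (k:ℤ)) : ℤ × ℤ)) := by
      intro a b h
      simpa using congrArg Prod.fst h
    have h1 : (∑' k : ℕ, ∑' p : ℤ × ℤ × ℤ, ENNReal.ofReal (q0Summand (k:ℤ) (k:ℤ) p))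
        ≤ ∑' (mn : ℤ × ℤ) (p : ℤ × ℤ × ℤ), ENNReal.ofReal (q0Summand mn.1 mn.2 p) :=
      ENNReal.tsum_comp_le_tsum_of_injective inj
        (fun mn => ∑' p : ℤ × ℤ × ℤ, ENNReal.ofReal (q0Summand mn.1 mn.2 p))
    have h2 : ∀ k : ℕ, ENNReal.ofReal (1 / (2*(k:ℝ)+1))
        ≤ ∑' p : ℤ × ℤ × ℤ, ENNReal.ofReal (q0Summand (k:ℤ) (k:ℤ) p) := by
      intro k
      set box : Finset (ℤ × ℤ × ℤ) :=
        Finset.Icc (-(k:ℤ)) k ×ˢ (Finset.Icc (-(k:ℤ)) k ×ˢ Finset.Icc (-(k:ℤ)) k) with hbox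
      have hcard : box.card = (2*k+1)^3 := by
        rw [hbox, Finset.card_product, Finset.card_product, Int.card_Icc]
        have : ((k:ℤ) + 1 - -(k:ℤ)).toNat = 2*k+1 := by omega
        rw [this]; ring
      have hterm : ∀ p ∈ box, ENNReal.ofReal (1/(2*(k:ℝ)+1)^4)
          ≤ ENNReal.ofReal (q0Summand (k:ℤ) (k:ℤ) p) := by
        intro p hp
        apply ENNReal.ofReal_le_ofReal
        obtain ⟨a, b, c⟩ := p
        rw [hbox] at hp
        simp only [Finset.mem_product, Finset.mem_Icc] at hp
        obtain ⟨⟨ha1, ha2⟩, ⟨hb1, hb2⟩, ⟨hc1, hc2⟩⟩ := hp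
        have ha : (a:ℝ)^2 ≤ (k:ℝ)^2 := by
          have : a^2 ≤ (k:ℤ)^2 := by nlinarith
          exact_mod_cast this
        have hb : (b:ℝ)^2 ≤ (k:ℝ)^2 := by
          have : b^2 ≤ (k:ℤ)^2 := by nlinarith
          exact_mod_cast this
        have hc : (c:ℝ)^2 ≤ (k:ℝ)^2 := by
          have : c^2 ≤ (k:ℤ)^2 := by nlinarith
          exact_mod_cast this
        unfold q0Summand
        rw [normSq3_cast]
        have hk0 : (0:ℝ) ≤ (k:ℝ) := Nat.cast_nonneg k
        have hD : ((k:ℝ)^2 + ((a:ℝ)^2 + (b:ℝ)^2 + (c:ℝ)^2) + 1) ≤ (2*(k:ℝ)+1)^2 := by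
          nlinarith
        have hDpos : (0:ℝ) < (k:ℝ)^2 + ((a:ℝ)^2 + (b:ℝ)^2 + (c:ℝ)^2) + 1 := by positivity
        apply one_div_le_one_div_of_le (by positivity)
        calc ((k:ℝ)^2 + ((a:ℝ)^2+(b:ℝ)^2+(c:ℝ)^2) + 1) * ((k:ℝ)^2 + ((a:ℝ)^2+(b:ℝ)^2+(c:ℝ)^2) + 1)
            ≤ (2*(k:ℝ)+1)^2 * (2*(k:ℝ)+1)^2 := by nlinarith
          _ = (2*(k:ℝ)+1)^4 := by ring
      calc ENNReal.ofReal (1 / (2*(k:ℝ)+1))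
          = ENNReal.ofReal (((2*k+1)^3 : ℕ) * (1/(2*(k:ℝ)+1)^4)) := by
            congr 1
            have hk : (2*(k:ℝ)+1) ≠ 0 := by positivity
            push_cast
            field_simp
        _ = (((2*k+1)^3 : ℕ) : ℝ≥0∞) * ENNReal.ofReal (1/(2*(k:ℝ)+1)^4) := by
            rw [ENNReal.ofReal_mul (by positivity)]
            congr 1
            rw [ENNReal.ofReal_natCast]
        _ = ∑ _x ∈ box, ENNReal.ofReal (1/(2*(k:ℝ)+1)^4) := by
            rw [Finset.sum_const, hcard, nsmul_eq_mul]
        _ ≤ ∑ p ∈ box, ENNReal.ofReal (q0Summand (k:ℤ) (k:ℤ) p) :=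
            Finset.sum_le_sum hterm
        _ ≤ ∑' p : ℤ × ℤ × ℤ, ENNReal.ofReal (q0Summand (k:ℤ) (k:ℤ) p) :=
            ENNReal.sum_le_tsum box
    have h3 : (∑' k : ℕ, ENNReal.ofReal (1 / (2*(k:ℝ)+1))) = ⊤ := by
      by_contra h
      have hsum := ENNReal.summable_toReal h
      have hsum' : Summable (fun k : ℕ => 1 / (2*(k:ℝ)+1)) := by
        apply hsum.congr
        intro k
        rw [ENNReal.toReal_ofReal (by positivity)]
      have : Summable (fun k : ℕ => 1 / (k:ℝ)) := by
        apply (hsum'.mul_left 3).of_nonneg_of_le (fun k => by positivity)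
        intro k
        rcases Nat.eq_zero_or_pos k with hk | hk
        · subst hk; norm_num
        · rw [div_le_iff₀ (by positivity)]
          have hk1 : (1:ℝ) ≤ (k:ℝ) := by exact_mod_cast hk
          rw [mul_one_div, div_mul_eq_mul_div, le_div_iff₀ (by positivity)]
          nlinarith
      exact Real.not_summable_one_div_natCast this
    calc (⊤ : ℝ≥0∞) = ∑' k : ℕ, ENNReal.ofReal (1 / (2*(k:ℝ)+1)) := h3.symm
      _ ≤ ∑' k : ℕ, ∑' p : ℤ × ℤ × ℤ, ENNReal.ofReal (q0Summand (k:ℤ) (k:ℤ) p) :=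
          ENNReal.tsum_le_tsum h2
      _ ≤ _ := h1
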